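/- Let g_∞ be the standard Gaussian density on ℝ^d and let g_r be the density of N(0, σ_r² I_d) with σ_r² = 1 + σ_ε²/r for fixed σ_ε ≥ 0. Then for any bounded measurable f : ℝ^d → ℝ, ‖∫ v f(v) g_r(v) dv − ∫ v f(v) g_∞(v) dv‖ = O(1/r) as r → ∞. -/

import Mathlib

open MeasureTheory Filter

private lemma aux_exp_sub_exp {A B M : ℝ} (hA : A ≤ M) (hB : B ≤ M) :
    |Real.exp A - Real.exp B| ≤ |A - B| * Real.exp M := by
  wlog h : B ≤ A generalizing A B
  · rw [abs_sub_comm, abs_sub_comm A B]; exact this hB hA (le_of_not_ge h)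
  rw [abs_of_nonneg (sub_nonneg.2 (Real.exp_le_exp.2 h)), abs_of_nonneg (sub_nonneg.2 h)]
  have h1 : Real.exp B = Real.exp A * Real.exp (B - A) := by
    rw [← Real.exp_add]; ring_nf
  have h2 : (B - A) + 1 ≤ Real.exp (B - A) := Real.add_one_le_exp _
  have h3 : Real.exp A ≤ Real.exp M := Real.exp_le_exp.2 hA
  nlinarith [Real.exp_pos A, Real.exp_pos M]

private lemma aux_key (d : ℕ) {s ε E : ℝ} (hs : 0 ≤ s) (hε : 0 ≤ ε) (hεE : ε ≤ E) :
    |(1 + ε) ^ (-(d : ℝ) / 2) * Real.exp (-s / (1 + ε)) - Real.exp (-s)| ≤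
      ε * ((d : ℝ) / 2 + s) * Real.exp (-s / (1 + E)) := by
  have h1 : (0 : ℝ) < 1 + ε := by linarith
  have hE : (0 : ℝ) < 1 + E := by linarith
  have hrw : (1 + ε) ^ (-(d : ℝ) / 2) * Real.exp (-s / (1 + ε))
      = Real.exp (Real.log (1 + ε) * (-(d : ℝ) / 2) + -s / (1 + ε)) := by
    rw [Real.exp_add, Real.rpow_def_of_pos h1]
  have hL0 : 0 ≤ Real.log (1 + ε) := Real.log_nonneg (by linarith)
  have hL1 : Real.log (1 + ε) ≤ ε := by
    have := Real.log_le_sub_one_of_pos h1; linarith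
  have hA : Real.log (1 + ε) * (-(d : ℝ) / 2) + -s / (1 + ε) ≤ -s / (1 + E) := by
    have h5 : s / (1 + E) ≤ s / (1 + ε) := by gcongr
    have h6 : Real.log (1 + ε) * (-(d : ℝ) / 2) ≤ 0 := by
      apply mul_nonpos_of_nonneg_of_nonpos hL0
      have : (0:ℝ) ≤ (d:ℝ) := Nat.cast_nonneg d
      linarith
    have : -s / (1 + ε) = -(s / (1+ε)) := by ring
    rw [this]
    have : -s / (1 + E) = -(s / (1+E)) := by ring
    rw [this]
    linarith
  have hB : -s ≤ -s / (1 + E) := by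
    have : s / (1 + E) ≤ s := div_le_self hs (by linarith)
    have h7 : -s / (1 + E) = -(s / (1+E)) := by ring
    rw [h7]; linarith
  rw [hrw]
  refine (aux_exp_sub_exp hA hB).trans ?_
  apply mul_le_mul_of_nonneg_right _ (Real.exp_pos _).le
  have hq : s - s / (1 + ε) = s * ε / (1 + ε) := by field_simp; ring
  have hq0 : 0 ≤ s * ε / (1 + ε) := by positivity
  have hq1 : s * ε / (1 + ε) ≤ s * ε := div_le_self (by positivity) (by linarith)
  have hd0 : (0:ℝ) ≤ (d:ℝ) := Nat.cast_nonneg d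
  have e1 : 0 ≤ s - s / (1 + ε) := by
    have := div_le_self hs (by linarith : (1:ℝ) ≤ 1 + ε); linarith
  have e2 : s - s / (1 + ε) ≤ s * ε := by rw [hq]; exact hq1
  have p1 : (d:ℝ)/2 * Real.log (1+ε) ≤ (d:ℝ)/2 * ε :=
    mul_le_mul_of_nonneg_left hL1 (by linarith)
  have p2 : 0 ≤ (d:ℝ)/2 * Real.log (1+ε) := mul_nonneg (by linarith) hL0
  have p3 : 0 ≤ ε * s := mul_nonneg hε hs
  have hgoal : Real.log (1+ε) * (-(d:ℝ)/2) + -s/(1+ε) - -s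
      = -((d:ℝ)/2 * Real.log (1+ε)) + (s - s/(1+ε)) := by ring
  rw [abs_le, hgoal]
  constructor <;> nlinarith []

private lemma aux_integrable_exp (d : ℕ) {b : ℝ} (hb : 0 < b) :
    Integrable (fun v : EuclideanSpace ℝ (Fin d) => Real.exp (-b * ‖v‖ ^ 2)) := by
  have h := (GaussianFourier.integrable_cexp_neg_mul_sq_norm_add
      (V := EuclideanSpace ℝ (Fin d)) (b := (b : ℂ)) (by simpa using hb) 0 0).norm
  refine h.congr (Filter.Eventually.of_forall fun v => ?_)
  simp only [Complex.norm_exp]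
  norm_num
  exact Or.inl (by rw [← Complex.ofReal_pow, Complex.ofReal_re])

private lemma aux_pointwise_pow_exp {c : ℝ} (hc : 0 < c) (k : ℕ) {x : ℝ} (hx : 0 ≤ x) :
    x ^ k * Real.exp (-c * x ^ 2) ≤ 1 + (k.factorial : ℝ) / c ^ k := by
  have hfc : 0 ≤ (k.factorial : ℝ) / c ^ k := by positivity
  rcases le_or_gt x 1 with h | h
  · have h1 : x ^ k ≤ 1 := pow_le_one₀ hx h
    have h2 : Real.exp (-c * x ^ 2) ≤ 1 := by
      rw [Real.exp_le_one_iff]; nlinarith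
    nlinarith [Real.exp_pos (-c * x ^ 2), pow_nonneg hx k]
  · have hx1 : (1:ℝ) ≤ x := h.le
    have e1 : (c * x ^ 2) ^ k / (k.factorial : ℝ) ≤ Real.exp (c * x ^ 2) :=
      Real.pow_div_factorial_le_exp _ (by positivity) k
    have e3 : (c * x ^ 2) ^ k = c ^ k * (x ^ k) ^ 2 := by ring
    rw [e3] at e1
    have hxk : (1:ℝ) ≤ x ^ k := one_le_pow₀ hx1
    have hfp : (0:ℝ) < (k.factorial : ℝ) := by positivity
    have e2 : x ^ k * Real.exp (-c * x ^ 2) ≤ (k.factorial : ℝ) / c ^ k := by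
      rw [neg_mul, Real.exp_neg, mul_inv_le_iff₀ (Real.exp_pos _)]
      calc x ^ k ≤ (x ^ k) ^ 2 := by nlinarith
        _ = (k.factorial : ℝ) / c ^ k * (c ^ k * (x ^ k) ^ 2 / (k.factorial : ℝ)) := by
            field_simp
        _ ≤ (k.factorial : ℝ) / c ^ k * Real.exp (c * x ^ 2) := by
            exact mul_le_mul_of_nonneg_left e1 hfc
    linarith

private lemma aux_integrable_pow_exp (d k : ℕ) {b : ℝ} (hb : 0 < b) :
    Integrable (fun v : EuclideanSpace ℝ (Fin d) => ‖v‖ ^ k * Real.exp (-b * ‖v‖ ^ 2)) := by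
  have hb2 : 0 < b / 2 := by linarith
  refine Integrable.mono' ((aux_integrable_exp d hb2).const_mul
      (1 + (k.factorial : ℝ) / (b / 2) ^ k)) ?_ (Filter.Eventually.of_forall fun v => ?_)
  · exact ((continuous_norm.pow k).mul
      (Real.continuous_exp.comp ((continuous_const.mul (continuous_norm.pow 2))))).aestronglyMeasurable
  · have h1 : ‖v‖ ^ k * Real.exp (-(b / 2) * ‖v‖ ^ 2) ≤ 1 + (k.factorial : ℝ) / (b / 2) ^ k :=
      aux_pointwise_pow_exp hb2 k (norm_nonneg v)
    have h2 : Real.exp (-b * ‖v‖ ^ 2)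
        = Real.exp (-(b / 2) * ‖v‖ ^ 2) * Real.exp (-(b / 2) * ‖v‖ ^ 2) := by
      rw [← Real.exp_add]; ring_nf
    rw [Real.norm_of_nonneg (by positivity)]
    calc ‖v‖ ^ k * Real.exp (-b * ‖v‖ ^ 2)
        = (‖v‖ ^ k * Real.exp (-(b / 2) * ‖v‖ ^ 2)) * Real.exp (-(b / 2) * ‖v‖ ^ 2) := by
          rw [h2]; ring
      _ ≤ (1 + (k.factorial : ℝ) / (b / 2) ^ k) * Real.exp (-(b / 2) * ‖v‖ ^ 2) :=
          mul_le_mul_of_nonneg_right h1 (Real.exp_pos _).le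

private lemma aux_integrable_moment (d : ℕ) (f : EuclideanSpace ℝ (Fin d) → ℝ)
    (hmeas : Measurable f) (C : ℝ) (hbdd : ∀ v, |f v| ≤ C) {a : ℝ} (ha : 0 < a) :
    Integrable (fun v : EuclideanSpace ℝ (Fin d) =>
      (f v * ((2 * Real.pi * a) ^ (-(d : ℝ) / 2) * Real.exp (-‖v‖ ^ 2 / (2 * a)))) • v) := by
  have hb : 0 < 1 / (2 * a) := by positivity
  have hq : (0:ℝ) ≤ (2 * Real.pi * a) ^ (-(d : ℝ) / 2) :=
    Real.rpow_nonneg (by positivity) _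
  refine Integrable.mono'
    ((aux_integrable_pow_exp d 1 hb).const_mul (C * (2 * Real.pi * a) ^ (-(d : ℝ) / 2)))
    ?_ (Filter.Eventually.of_forall fun v => ?_)
  · have hcont : Continuous fun v : EuclideanSpace ℝ (Fin d) =>
        (2 * Real.pi * a) ^ (-(d : ℝ) / 2) * Real.exp (-‖v‖ ^ 2 / (2 * a)) :=
      continuous_const.mul (Real.continuous_exp.comp
        (((continuous_norm.pow 2).neg).div_const (2 * a)))
    exact ((hmeas.mul hcont.measurable).aestronglyMeasurable).smul aestronglyMeasurable_id
  · rw [norm_smul, Real.norm_eq_abs, abs_mul]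
    have h2 : Real.exp (-‖v‖ ^ 2 / (2 * a)) = Real.exp (-(1 / (2 * a)) * ‖v‖ ^ 2) := by
      rw [show -‖v‖ ^ 2 / (2 * a) = -(1 / (2 * a)) * ‖v‖ ^ 2 by ring]
    rw [abs_of_nonneg (by positivity : (0:ℝ) ≤ (2 * Real.pi * a) ^ (-(d : ℝ) / 2) *
      Real.exp (-‖v‖ ^ 2 / (2 * a)))]
    calc |f v| * ((2 * Real.pi * a) ^ (-(d : ℝ) / 2) * Real.exp (-‖v‖ ^ 2 / (2 * a))) * ‖v‖
        ≤ C * ((2 * Real.pi * a) ^ (-(d : ℝ) / 2) * Real.exp (-‖v‖ ^ 2 / (2 * a))) * ‖v‖ := by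
          have : (0:ℝ) ≤ ((2 * Real.pi * a) ^ (-(d : ℝ) / 2) *
              Real.exp (-‖v‖ ^ 2 / (2 * a))) * ‖v‖ := by positivity
          nlinarith [hbdd v, norm_nonneg v, Real.exp_pos (-‖v‖ ^ 2 / (2 * a))]
      _ = C * (2 * Real.pi * a) ^ (-(d : ℝ) / 2) *
            (‖v‖ ^ 1 * Real.exp (-(1 / (2 * a)) * ‖v‖ ^ 2)) := by rw [← h2]; ring

private noncomputable def auxD (d : ℕ) (C σε : ℝ) (v : EuclideanSpace ℝ (Fin d)) : ℝ :=
  C * (2 * Real.pi) ^ (-(d : ℝ) / 2) *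
    (((d : ℝ) / 2 + ‖v‖ ^ 2 / 2) * ‖v‖ *
      Real.exp (-(1 / (2 * (1 + σε ^ 2))) * ‖v‖ ^ 2))

private lemma auxD_integrable (d : ℕ) (C σε : ℝ) : Integrable (auxD d C σε) := by
  have hc : (0:ℝ) < 1 / (2 * (1 + σε ^ 2)) := by positivity
  have h1 := (aux_integrable_pow_exp d 1 hc).const_mul ((d:ℝ)/2)
  have h3 := (aux_integrable_pow_exp d 3 hc).const_mul ((1:ℝ)/2)
  refine ((h1.add h3).const_mul (C * (2 * Real.pi) ^ (-(d : ℝ) / 2))).congr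
    (Filter.Eventually.of_forall fun v => ?_)
  simp only [auxD, Pi.add_apply, pow_one]
  ring


set_option maxHeartbeats 1000000 in
/-- For bounded measurable `f`, the (vector-valued) first moment of `f` against the
`N(0, σ_r² I_d)` density with `σ_r² = 1 + σ_ε²/r` converges to the corresponding
moment against the standard Gaussian density at rate `O(1/r)`. -/
theorem gaussian_first_moment_bigO
    (d : ℕ) (σε : ℝ) (hσ : 0 ≤ σε)
    (f : EuclideanSpace ℝ (Fin d) → ℝ) (hmeas : Measurable f)
    (C : ℝ) (hbdd : ∀ v, |f v| ≤ C) :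
    (fun r : ℕ =>
        ‖(∫ v : EuclideanSpace ℝ (Fin d),
            (f v * ((2 * Real.pi * (1 + σε ^ 2 / r)) ^ (-(d : ℝ) / 2) *
              Real.exp (-‖v‖ ^ 2 / (2 * (1 + σε ^ 2 / r))))) • v)
          - ∫ v : EuclideanSpace ℝ (Fin d),
            (f v * ((2 * Real.pi) ^ (-(d : ℝ) / 2) * Real.exp (-‖v‖ ^ 2 / 2))) • v‖)
      =O[atTop] (fun r : ℕ => 1 / (r : ℝ)) := by
  have hC : 0 ≤ C := (abs_nonneg _).trans (hbdd 0)
  have hp0 : (0:ℝ) ≤ (2 * Real.pi) ^ (-(d : ℝ) / 2) :=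
    Real.rpow_nonneg (by positivity) _
  rw [Asymptotics.isBigO_iff]
  refine ⟨σε ^ 2 * ∫ v, auxD d C σε v, ?_⟩
  filter_upwards [eventually_ge_atTop 1] with r hr
  have hr0 : (0:ℝ) < (r:ℝ) := by exact_mod_cast Nat.pos_of_ne_zero (by omega)
  have hε0 : (0:ℝ) ≤ σε ^ 2 / r := by positivity
  have hεE : σε ^ 2 / r ≤ σε ^ 2 := by
    apply div_le_self (by positivity)
    exact_mod_cast hr
  have ha : (0:ℝ) < 1 + σε ^ 2 / r := by linarith
  have hIr := aux_integrable_moment d f hmeas C hbdd ha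
  have hIg : Integrable (fun v : EuclideanSpace ℝ (Fin d) =>
      (f v * ((2 * Real.pi) ^ (-(d : ℝ) / 2) * Real.exp (-‖v‖ ^ 2 / 2))) • v) := by
    have := aux_integrable_moment d f hmeas C hbdd one_pos
    simpa using this
  have hpt : ∀ v : EuclideanSpace ℝ (Fin d),
      ‖(f v * ((2 * Real.pi * (1 + σε ^ 2 / r)) ^ (-(d : ℝ) / 2) *
          Real.exp (-‖v‖ ^ 2 / (2 * (1 + σε ^ 2 / r))))) • v
        - (f v * ((2 * Real.pi) ^ (-(d : ℝ) / 2) * Real.exp (-‖v‖ ^ 2 / 2))) • v‖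
      ≤ (σε ^ 2 / r) * auxD d C σε v := by
    intro v
    have hs : (0:ℝ) ≤ ‖v‖ ^ 2 / 2 := by positivity
    have key := aux_key d hs hε0 hεE
    have hsplit : (2 * Real.pi * (1 + σε ^ 2 / r)) ^ (-(d : ℝ) / 2)
        = (2 * Real.pi) ^ (-(d : ℝ) / 2) * (1 + σε ^ 2 / r) ^ (-(d : ℝ) / 2) :=
      Real.mul_rpow (by positivity) (by linarith)
    have he1 : -‖v‖ ^ 2 / (2 * (1 + σε ^ 2 / r)) = -(‖v‖ ^ 2 / 2) / (1 + σε ^ 2 / r) := by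
      rw [neg_div, neg_div, div_div]
    have he2 : -‖v‖ ^ 2 / 2 = -(‖v‖ ^ 2 / 2) := by rw [neg_div]
    have he3 : -(‖v‖ ^ 2 / 2) / (1 + σε ^ 2)
        = -(1 / (2 * (1 + σε ^ 2))) * ‖v‖ ^ 2 := by
      rw [neg_div, neg_mul, neg_inj, div_div, div_eq_mul_inv, one_div, mul_comm]
    rw [he3] at key
    rw [← sub_smul, norm_smul, Real.norm_eq_abs, hsplit, he1, he2]
    have hfac : f v * ((2 * Real.pi) ^ (-(d : ℝ) / 2) * (1 + σε ^ 2 / r) ^ (-(d : ℝ) / 2) *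
          Real.exp (-(‖v‖ ^ 2 / 2) / (1 + σε ^ 2 / r)))
        - f v * ((2 * Real.pi) ^ (-(d : ℝ) / 2) * Real.exp (-(‖v‖ ^ 2 / 2)))
        = (f v * (2 * Real.pi) ^ (-(d : ℝ) / 2)) *
          ((1 + σε ^ 2 / r) ^ (-(d : ℝ) / 2) * Real.exp (-(‖v‖ ^ 2 / 2) / (1 + σε ^ 2 / r))
            - Real.exp (-(‖v‖ ^ 2 / 2))) := by ring
    rw [hfac, abs_mul]
    calc |f v * (2 * Real.pi) ^ (-(d : ℝ) / 2)| *
          |(1 + σε ^ 2 / r) ^ (-(d : ℝ) / 2) * Real.exp (-(‖v‖ ^ 2 / 2) / (1 + σε ^ 2 / r))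
            - Real.exp (-(‖v‖ ^ 2 / 2))| * ‖v‖
        ≤ (C * (2 * Real.pi) ^ (-(d : ℝ) / 2)) *
            ((σε ^ 2 / r) * ((d:ℝ)/2 + ‖v‖ ^ 2 / 2) *
              Real.exp (-(1 / (2 * (1 + σε ^ 2))) * ‖v‖ ^ 2)) * ‖v‖ := by
          refine mul_le_mul (mul_le_mul ?_ key (abs_nonneg _) (by positivity))
            le_rfl (norm_nonneg v) (by positivity)
          rw [abs_mul, abs_of_nonneg hp0]
          exact mul_le_mul_of_nonneg_right (hbdd v) hp0
      _ = (σε ^ 2 / r) * auxD d C σε v := by simp only [auxD]; ring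
  have key2 : ‖(∫ v : EuclideanSpace ℝ (Fin d),
        (f v * ((2 * Real.pi * (1 + σε ^ 2 / r)) ^ (-(d : ℝ) / 2) *
          Real.exp (-‖v‖ ^ 2 / (2 * (1 + σε ^ 2 / r))))) • v)
      - ∫ v : EuclideanSpace ℝ (Fin d),
        (f v * ((2 * Real.pi) ^ (-(d : ℝ) / 2) * Real.exp (-‖v‖ ^ 2 / 2))) • v‖
      ≤ (σε ^ 2 / r) * ∫ v, auxD d C σε v := by
    rw [← integral_sub hIr hIg]
    refine (norm_integral_le_of_norm_le ((auxD_integrable d C σε).const_mul (σε ^ 2 / r))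
      (Filter.Eventually.of_forall fun v => hpt v)).trans ?_
    rw [integral_const_mul]
  rw [Real.norm_of_nonneg (norm_nonneg _),
    Real.norm_of_nonneg (by positivity : (0:ℝ) ≤ 1 / (r:ℝ))]
  refine key2.trans (le_of_eq ?_)
  ring
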